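/- arXiv:1710.01588 — 3 statements merged into one kernel-verified Lean document; each statement's English description precedes it below -/
import Mathlib

section
/- For fixed z in the open unit disk, (1/2π) ∫₀^{2π} ((e^{iu} − z)/(1 − z̄ e^{iu})) · (e^{iu}/(z − e^{iu})²) du = 1/(1 − |z|²), while (1/2π) ∫₀^{2π} ((e^{iu} − z)/(1 − z̄ e^{iu})) · (e^{−iu}/(z̄ − e^{−iu})²) du = 0. -/
/-!
Substituting `w = e^{iu}` (so `e^{-iu} = w⁻¹` and `du = dw / (i w)`) turns both integrals into
contour integrals over the unit circle. The first integrand becomes `(w - z)⁻¹ (1 - z̄ w)⁻¹`, and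
since `|z̄| < 1` the factor `(1 - z̄ w)⁻¹` is holomorphic on the closed disc, so Cauchy's integral
formula gives `2πi / (1 - z̄ z)`. The second becomes `(w - z) / (1 - z̄ w)³`, holomorphic on the
closed disc, so its integral vanishes by Cauchy's theorem.
-/

open Complex Metric ComplexConjugate

theorem integral_exp_mul_I_mul_eq_circleIntegral (f : ℂ → ℂ) :
    ∫ u in (0 : ℝ)..2 * Real.pi, exp (u * I) * f (exp (u * I)) = I⁻¹ * ∮ w in C(0, 1), f w := by
  simp only [circleIntegral, deriv_circleMap, circleMap_zero, ofReal_one, one_mul, smul_eq_mul]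
  rw [← intervalIntegral.integral_const_mul]
  congr 1 with u
  field_simp

theorem one_sub_mul_ne_zero_of_norm_lt_one {a w : ℂ} (ha : ‖a‖ < 1) (hw : ‖w‖ ≤ 1) :
    1 - a * w ≠ 0 := by
  have : ‖a * w‖ < 1 := by
    rw [norm_mul]
    exact (mul_le_of_le_one_right (norm_nonneg a) hw).trans_lt ha
  intro h
  rw [← sub_eq_zero.mp h, norm_one] at this
  exact lt_irrefl _ this

theorem differentiableOn_one_sub_mul_inv {a : ℂ} (ha : ‖a‖ < 1) :
    DifferentiableOn ℂ (fun w ↦ (1 - a * w)⁻¹) (closedBall 0 1) :=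
  ((differentiableOn_const 1).sub (differentiableOn_id.const_mul a)).inv fun w hw ↦
    one_sub_mul_ne_zero_of_norm_lt_one ha (by simpa using hw)

theorem circleIntegral_sub_inv_mul_one_sub_mul_inv {a z : ℂ} (ha : ‖a‖ < 1) (hz : ‖z‖ < 1) :
    ∮ w in C(0, 1), (w - z)⁻¹ * (1 - a * w)⁻¹ = 2 * Real.pi * I * (1 - a * z)⁻¹ :=
  (differentiableOn_one_sub_mul_inv ha).circleIntegral_sub_inv_smul (by simpa using hz)

theorem circleIntegral_sub_mul_one_sub_mul_inv_pow {a : ℂ} (ha : ‖a‖ < 1) (z : ℂ) (n : ℕ) :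
    ∮ w in C(0, 1), (w - z) * (1 - a * w)⁻¹ ^ n = 0 :=
  ((differentiableOn_id.sub_const z).mul ((differentiableOn_one_sub_mul_inv ha).pow n)).mono
    closure_ball_subset_closedBall |>.diffContOnCl.circleIntegral_eq_zero zero_le_one

theorem sub_div_one_sub_mul_mul_div_sub_sq {K : Type*} [Field K] (a z w : K) :
    (w - z) / (1 - a * w) * (w / (z - w) ^ 2) = w * ((w - z)⁻¹ * (1 - a * w)⁻¹) := by
  rcases eq_or_ne w z with rfl | hwz
  · simp
  · have : z - w ≠ 0 := sub_ne_zero.mpr hwz.symm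
    field_simp
    ring

theorem sub_div_one_sub_mul_mul_inv_div_sub_inv_sq {K : Type*} [Field K] (a z : K) {w : K}
    (hw : w ≠ 0) :
    (w - z) / (1 - a * w) * (w⁻¹ / (a - w⁻¹) ^ 2) = w * ((w - z) * (1 - a * w)⁻¹ ^ 3) := by
  have : a - w⁻¹ = -(1 - a * w) / w := by field_simp; ring
  rw [this, neg_div, neg_sq, div_pow]
  rcases eq_or_ne (1 - a * w) 0 with h | h
  · simp [h]
  · field_simp

/-- For `|z| < 1`:
`(1/2π)∫₀^{2π} ((e^{iu}−z)/(1−z̄e^{iu})) e^{iu}/(z−e^{iu})² du = 1/(1−|z|²)`, and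
`(1/2π)∫₀^{2π} ((e^{iu}−z)/(1−z̄e^{iu})) e^{−iu}/(z̄−e^{−iu})² du = 0`. -/
theorem stmt8 (z : ℂ) (hz : ‖z‖ < 1) :
    ((1 / (2 * Real.pi) : ℂ) * ∫ u in (0:ℝ)..(2 * Real.pi),
        ((Complex.exp (u * Complex.I) - z) / (1 - (starRingEnd ℂ) z * Complex.exp (u * Complex.I))) *
          (Complex.exp (u * Complex.I) / (z - Complex.exp (u * Complex.I)) ^ 2)
      = 1 / ((1 - ‖z‖ ^ 2 : ℝ) : ℂ)) ∧
    ((1 / (2 * Real.pi) : ℂ) * ∫ u in (0:ℝ)..(2 * Real.pi),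
        ((Complex.exp (u * Complex.I) - z) / (1 - (starRingEnd ℂ) z * Complex.exp (u * Complex.I))) *
          (Complex.exp (-(u : ℂ) * Complex.I) /
            ((starRingEnd ℂ) z - Complex.exp (-(u : ℂ) * Complex.I)) ^ 2)
      = 0) := by
  have hz' : ‖(starRingEnd ℂ) z‖ < 1 := by rwa [norm_conj]
  have hconj : 1 - (starRingEnd ℂ) z * z = ((1 - ‖z‖ ^ 2 : ℝ) : ℂ) := by
    push_cast
    rw [conj_mul']
  constructor
  · simp only [sub_div_one_sub_mul_mul_div_sub_sq]
    rw [integral_exp_mul_I_mul_eq_circleIntegral (fun w ↦ (w - z)⁻¹ * (1 - conj z * w)⁻¹),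
      circleIntegral_sub_inv_mul_one_sub_mul_inv hz' hz, hconj]
    field_simp
  · simp only [neg_mul, exp_neg, sub_div_one_sub_mul_mul_inv_div_sub_inv_sq _ _ (exp_ne_zero _)]
    rw [integral_exp_mul_I_mul_eq_circleIntegral (fun w ↦ (w - z) * (1 - conj z * w)⁻¹ ^ 3),
      circleIntegral_sub_mul_one_sub_mul_inv_pow hz', mul_zero, mul_zero]
end

section
/- With F, B, z as above, the mixed derivative satisfies ∂²F/∂z̄∂t at (0, z, z): d/dt F_z̄(t, z, w)|_{t=0, w=z} = (1/2π) · (1 − |z|²) ∫₀^{2π} i e^{2iu} B(u) / (1 − z̄ e^{iu})⁴ du, where F_z̄(t,z,w) = (1/2π)∫₀^{2π} ((h_t(e^{iu}) − w)/(1 − w̄ h_t(e^{iu}))) e^{−iu}/(z̄ − e^{−iu})² du. -/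
/-!
Write the integrand as `φ(h_t(e^{iu})) K(u)` with the Blaschke factor `φ(a) = (a - z)/(1 - z̄ a)`
and `K(u) = e^{-iu}/(z̄ - e^{-iu})² = e^{iu}/(1 - z̄ e^{iu})²`. On the closed unit disc `φ` has a
second-order Taylor remainder bounded by `‖a - b‖²/(1 - |z|)³`, so the expansion
`h_t = e^{iu} + t i e^{iu} B(u) + o(t)`, uniform in `u`, passes through `φ` and through
multiplication by the bounded kernel `K`; a first-order expansion that is uniform in `u` can be
integrated over a bounded interval. With `φ'(a) = (1 - |z|²)/(1 - z̄ a)²` the derivative of the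
integrand is `(1 - |z|²) i e^{2iu} B(u)/(1 - z̄ e^{iu})⁴`.
-/

open Complex Real MeasureTheory ComplexConjugate Filter Topology Asymptotics

section UniformDeriv

variable {α : Type*} {t₀ : ℝ}

/-- `f t u = f t₀ u + (t - t₀) • f' u + o(t - t₀)` as `t → t₀`, uniformly in `u` (this is what the
factor `⊤` of the filter encodes). -/
def HasUniformDerivAt {E : Type*} [NormedAddCommGroup E] [NormedSpace ℝ E]
    (f : ℝ → α → E) (f' : α → E) (t₀ : ℝ) : Prop :=
  (fun p : ℝ × α => f p.1 p.2 - f t₀ p.2 - (p.1 - t₀) • f' p.2) =o[𝓝 t₀ ×ˢ ⊤] fun p => p.1 - t₀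

section NormedSpace

variable {E : Type*} [NormedAddCommGroup E] [NormedSpace ℝ E]

theorem hasUniformDerivAt_iff {f : ℝ → α → E} {f' : α → E} : HasUniformDerivAt f f' t₀ ↔
    ∀ ε > 0, ∀ᶠ t in 𝓝 t₀, ∀ u, ‖f t u - f t₀ u - (t - t₀) • f' u‖ ≤ ε * ‖t - t₀‖ := by
  simp only [HasUniformDerivAt, isLittleO_iff]
  exact forall₂_congr fun _ _ => mem_prod_top

theorem HasUniformDerivAt.hasDerivAt_intervalIntegral {f : ℝ → ℝ → E} {f' : ℝ → E} {a b : ℝ}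
    (hf : HasUniformDerivAt f f' t₀) (hfi : ∀ᶠ t in 𝓝 t₀, IntervalIntegrable (f t) volume a b)
    (hf'i : IntervalIntegrable f' volume a b) :
    HasDerivAt (fun t => ∫ u in a..b, f t u) (∫ u in a..b, f' u) t₀ := by
  rw [hasDerivAt_iff_isLittleO, isLittleO_iff]
  intro c hc
  have hft₀ := hfi.self_of_nhds
  filter_upwards [hasUniformDerivAt_iff.1 hf (c / (|b - a| + 1)) (by positivity), hfi]
    with t hbound hft
  rw [← intervalIntegral.integral_smul, ← intervalIntegral.integral_sub hft hft₀,
    ← intervalIntegral.integral_sub (hft.sub hft₀) (g := fun u => (t - t₀) • f' u) (hf'i.smul _)]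
  calc _ ≤ c / (|b - a| + 1) * ‖t - t₀‖ * |b - a| :=
        intervalIntegral.norm_integral_le_of_norm_le_const fun u _ => hbound u
    _ = c * ‖t - t₀‖ * (|b - a| / (|b - a| + 1)) := by ring
    _ ≤ c * ‖t - t₀‖ * 1 := by gcongr; exact div_le_one_of_le₀ (by linarith) (by positivity)
    _ = c * ‖t - t₀‖ := mul_one _

end NormedSpace

section NormedField

variable {𝕜 : Type*} [NormedField 𝕜] [NormedAlgebra ℝ 𝕜]

theorem HasUniformDerivAt.mul_right_of_norm_le {f : ℝ → α → 𝕜} {f' k : α → 𝕜} {C : ℝ}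
    (hf : HasUniformDerivAt f f' t₀) (hk : ∀ u, ‖k u‖ ≤ C) :
    HasUniformDerivAt (fun t u => f t u * k u) (fun u => f' u * k u) t₀ := by
  have hkO : (fun p : ℝ × α => k p.2) =O[𝓝 t₀ ×ˢ ⊤] fun _ => (1 : ℝ) :=
    isBigO_of_le' _ fun p => by simpa using hk p.2
  refine (hf.mul_isBigO hkO).congr (fun p => ?_) fun p => mul_one _
  simp only [smul_mul_assoc, sub_mul]

theorem HasUniformDerivAt.comp_of_taylor_bound {h : ℝ → α → 𝕜} {v : α → 𝕜} {φ φ' : 𝕜 → 𝕜}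
    {s : Set 𝕜} {L M N : ℝ} (hh : HasUniformDerivAt h v t₀) (hv : ∀ u, ‖v u‖ ≤ M)
    (hs : ∀ t u, h t u ∈ s)
    (hφ : ∀ a ∈ s, ∀ b ∈ s, ‖φ a - φ b - φ' b * (a - b)‖ ≤ L * ‖a - b‖ ^ 2)
    (hφ' : ∀ u, ‖φ' (h t₀ u)‖ ≤ N) :
    HasUniformDerivAt (fun t u => φ (h t u)) (fun u => φ' (h t₀ u) * v u) t₀ := by
  set l := 𝓝 t₀ ×ˢ (⊤ : Filter α)
  have hτ : Tendsto (fun p : ℝ × α => p.1 - t₀) l (𝓝 0) := by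
    simpa using (tendsto_fst (f := 𝓝 t₀) (g := (⊤ : Filter α))).sub_const t₀
  have hlin : (fun p : ℝ × α => (p.1 - t₀) • v p.2) =O[l] fun p => p.1 - t₀ :=
    isBigO_of_le' _ fun p => by rw [norm_smul, mul_comm]; gcongr; exact hv p.2
  have hincr : (fun p : ℝ × α => h p.1 p.2 - h t₀ p.2) =O[l] fun p => p.1 - t₀ :=
    (hh.isBigO.add hlin).congr_left fun p => sub_add_cancel _ _
  have hrem : (fun p : ℝ × α =>
      φ (h p.1 p.2) - φ (h t₀ p.2) - φ' (h t₀ p.2) * (h p.1 p.2 - h t₀ p.2))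
        =o[l] fun p => p.1 - t₀ := by
    have hsq : (fun p : ℝ × α => (h p.1 p.2 - h t₀ p.2) ^ 2) =o[l] fun p => p.1 - t₀ :=
      (hincr.pow 2).trans_isLittleO ((isLittleO_pow_id one_lt_two).comp_tendsto hτ)
    refine IsBigO.trans_isLittleO (isBigO_of_le' (c := L) _ fun p => ?_) hsq
    simpa [norm_pow] using hφ _ (hs _ _) _ (hs _ _)
  have hφ'O : (fun p : ℝ × α => φ' (h t₀ p.2)) =O[l] fun _ => (1 : ℝ) :=
    isBigO_of_le' _ fun p => by simpa using hφ' p.2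
  refine (hrem.add ((hφ'O.mul_isLittleO hh).congr_right fun p => one_mul _)).congr_left
    fun p => ?_
  simp only [mul_sub, mul_smul_comm]
  abel

end NormedField

end UniformDeriv

section Blaschke

noncomputable def blaschke (z a : ℂ) : ℂ := (a - z) / (1 - conj z * a)

noncomputable def blaschkeDeriv (z a : ℂ) : ℂ := ((1 - ‖z‖ ^ 2 : ℝ) : ℂ) / (1 - conj z * a) ^ 2

variable {z a b x : ℂ}

theorem one_sub_norm_le_norm_one_sub_conj_mul (ha : ‖a‖ ≤ 1) : 1 - ‖z‖ ≤ ‖1 - conj z * a‖ := by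
  have hza : ‖conj z * a‖ ≤ ‖z‖ := by
    simpa [norm_mul] using mul_le_of_le_one_right (norm_nonneg z) ha
  linarith [norm_sub_norm_le (1 : ℂ) (conj z * a), norm_one (α := ℂ)]

theorem norm_div_one_sub_conj_mul_sq_le (hz : ‖z‖ < 1) (hx : ‖x‖ ≤ 1) (ha : ‖a‖ ≤ 1) :
    ‖x / (1 - conj z * a) ^ 2‖ ≤ 1 / (1 - ‖z‖) ^ 2 := by
  have hd : 0 < 1 - ‖z‖ := by linarith
  rw [norm_div, norm_pow]
  gcongr
  exact one_sub_norm_le_norm_one_sub_conj_mul ha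

theorem norm_blaschke_le (hz : ‖z‖ < 1) (ha : ‖a‖ ≤ 1) : ‖blaschke z a‖ ≤ 2 / (1 - ‖z‖) := by
  have hd : 0 < 1 - ‖z‖ := by linarith
  rw [blaschke, norm_div]
  gcongr
  · linarith [norm_sub_le a z]
  · exact one_sub_norm_le_norm_one_sub_conj_mul ha

theorem norm_blaschkeDeriv_le (hz : ‖z‖ < 1) (ha : ‖a‖ ≤ 1) :
    ‖blaschkeDeriv z a‖ ≤ 1 / (1 - ‖z‖) ^ 2 := by
  refine norm_div_one_sub_conj_mul_sq_le hz ?_ ha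
  rw [norm_real, Real.norm_eq_abs, abs_le]
  constructor <;> nlinarith [norm_nonneg z]

theorem blaschke_sub_sub_blaschkeDeriv_mul (ha : 1 - conj z * a ≠ 0) (hb : 1 - conj z * b ≠ 0) :
    blaschke z a - blaschke z b - blaschkeDeriv z b * (a - b) =
      ((1 - ‖z‖ ^ 2 : ℝ) : ℂ) * conj z * (a - b) ^ 2 /
        ((1 - conj z * a) * (1 - conj z * b) ^ 2) := by
  have hnorm : ((1 - ‖z‖ ^ 2 : ℝ) : ℂ) = 1 - conj z * z := by
    rw [mul_comm, mul_conj, normSq_eq_norm_sq]; push_cast; ring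
  rw [blaschke, blaschke, blaschkeDeriv, hnorm, div_sub_div _ _ ha hb, div_mul_eq_mul_div,
    div_sub_div _ _ (mul_ne_zero ha hb) (pow_ne_zero 2 hb),
    div_eq_div_iff (mul_ne_zero (mul_ne_zero ha hb) (pow_ne_zero 2 hb))
      (mul_ne_zero ha (pow_ne_zero 2 hb))]
  ring

theorem norm_blaschke_sub_sub_blaschkeDeriv_mul_le (hz : ‖z‖ < 1) (ha : ‖a‖ ≤ 1)
    (hb : ‖b‖ ≤ 1) :
    ‖blaschke z a - blaschke z b - blaschkeDeriv z b * (a - b)‖ ≤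
      1 / (1 - ‖z‖) ^ 3 * ‖a - b‖ ^ 2 := by
  have hd : 0 < 1 - ‖z‖ := by linarith
  have hda := one_sub_norm_le_norm_one_sub_conj_mul (z := z) ha
  have hdb := one_sub_norm_le_norm_one_sub_conj_mul (z := z) hb
  have hcoef : ‖((1 - ‖z‖ ^ 2 : ℝ) : ℂ) * conj z‖ ≤ 1 := by
    rw [norm_mul, norm_real, Real.norm_eq_abs, abs_of_nonneg (by nlinarith [norm_nonneg z]),
      RCLike.norm_conj]
    nlinarith [norm_nonneg z]
  rw [blaschke_sub_sub_blaschkeDeriv_mul (norm_pos_iff.1 (hd.trans_le hda))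
    (norm_pos_iff.1 (hd.trans_le hdb))]
  calc _ = ‖((1 - ‖z‖ ^ 2 : ℝ) : ℂ) * conj z‖ * ‖a - b‖ ^ 2 /
        (‖1 - conj z * a‖ * ‖1 - conj z * b‖ ^ 2) := by
        simp only [norm_div, norm_mul, norm_pow]
    _ ≤ 1 * ‖a - b‖ ^ 2 / ((1 - ‖z‖) * (1 - ‖z‖) ^ 2) := by gcongr
    _ = _ := by ring

theorem HasUniformDerivAt.blaschke {α : Type*} {t₀ : ℝ} {h : ℝ → α → ℂ} {v : α → ℂ} {M : ℝ}
    (hh : HasUniformDerivAt h v t₀) (hz : ‖z‖ < 1) (hh1 : ∀ t u, ‖h t u‖ ≤ 1)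
    (hv : ∀ u, ‖v u‖ ≤ M) :
    HasUniformDerivAt (fun t u => blaschke z (h t u)) (fun u => blaschkeDeriv z (h t₀ u) * v u)
      t₀ :=
  hh.comp_of_taylor_bound (s := Metric.closedBall 0 1) hv
    (fun t u => mem_closedBall_zero_iff.2 (hh1 t u))
    (fun _ ha _ hb => norm_blaschke_sub_sub_blaschkeDeriv_mul_le hz
      (mem_closedBall_zero_iff.1 ha) (mem_closedBall_zero_iff.1 hb))
    (fun u => norm_blaschkeDeriv_le hz (hh1 t₀ u))

end Blaschke

theorem inv_div_sub_inv_sq (c w : ℂ) : w⁻¹ / (c - w⁻¹) ^ 2 = w / (1 - c * w) ^ 2 := by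
  rcases eq_or_ne w 0 with rfl | hw
  · simp
  rw [show c - w⁻¹ = (c * w - 1) / w by field_simp, div_pow, div_div_eq_mul_div, ← neg_sub,
    neg_sq]
  field_simp

/-- With `h_t(e^{iu}) = e^{iu} + t i e^{iu} B(u) + o(t)` (uniformly in `u`, `B` bounded
measurable, `h_0 = id`) and `z ∈ 𝔻`, the mixed derivative of the Douady–Earle functional:
`d/dt F_z̄(t,z,w)|_{t=0, w=z} = (1/2π)(1−|z|²) ∫₀^{2π} i e^{2iu} B(u)/(1−z̄e^{iu})⁴ du`,
where `F_z̄(t,z,w) = (1/2π)∫₀^{2π} ((h_t(e^{iu})−w)/(1−w̄h_t(e^{iu}))) e^{−iu}/(z̄−e^{−iu})² du`. -/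
theorem stmt13 (h : ℝ → ℝ → ℂ) (B : ℝ → ℝ) (M : ℝ)
    (hBmeas : Measurable B) (hBbd : ∀ u, |B u| ≤ M)
    (hmeas : ∀ t, Measurable (h t))
    (hcirc : ∀ t u, ‖h t u‖ = 1)
    (h0 : ∀ u : ℝ, h 0 u = Complex.exp (u * Complex.I))
    (hder : ∀ ε > (0:ℝ), ∃ δ > (0:ℝ), ∀ t : ℝ, |t| < δ → ∀ u : ℝ,
      ‖h t u - Complex.exp (u * Complex.I)
          - (t : ℂ) * Complex.I * Complex.exp (u * Complex.I) * (B u : ℝ)‖ ≤ ε * |t|)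
    (z : ℂ) (hz : ‖z‖ < 1) :
    HasDerivAt
      (fun t : ℝ => (1 / (2 * Real.pi) : ℂ) * ∫ u in (0:ℝ)..(2 * Real.pi),
        ((h t u - z) / (1 - (starRingEnd ℂ) z * h t u)) *
          (Complex.exp (-(u : ℂ) * Complex.I) /
            ((starRingEnd ℂ) z - Complex.exp (-(u : ℂ) * Complex.I)) ^ 2))
      ((1 / (2 * Real.pi) : ℂ) * ((1 - ‖z‖ ^ 2 : ℝ) : ℂ) *
        ∫ u in (0:ℝ)..(2 * Real.pi),
          Complex.I * Complex.exp (2 * (u : ℂ) * Complex.I) * (B u : ℝ) /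
            (1 - (starRingEnd ℂ) z * Complex.exp (u * Complex.I)) ^ 4)
      0 := by
  set w : ℝ → ℂ := fun u => exp (u * I)
  set K : ℝ → ℂ := fun u => w u / (1 - conj z * w u) ^ 2
  have hw : ∀ u, ‖w u‖ ≤ 1 := fun u => (norm_exp_ofReal_mul_I u).le
  have hh : ∀ t u, ‖h t u‖ ≤ 1 := fun t u => (hcirc t u).le
  have hK : ∀ u, ‖K u‖ ≤ 1 / (1 - ‖z‖) ^ 2 := fun u =>
    norm_div_one_sub_conj_mul_sq_le hz (hw u) (hw u)
  have hv : ∀ u, ‖I * w u * B u‖ ≤ M := fun u => by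
    simpa [w, norm_exp_ofReal_mul_I] using hBbd u
  have hhw : HasUniformDerivAt h (fun u => I * w u * B u) 0 := by
    refine hasUniformDerivAt_iff.2 fun ε hε => ?_
    obtain ⟨δ, hδ, hbound⟩ := hder ε hε
    filter_upwards [Metric.ball_mem_nhds 0 hδ] with t ht u
    simpa [h0, mul_assoc] using hbound t (by simpa using ht) u
  have hF := (hhw.blaschke hz hh hv).mul_right_of_norm_le hK
  simp only [h0] at hF
  have hFint (t : ℝ) : IntervalIntegrable (fun u => blaschke z (h t u) * K u) volume 0 (2 * π) :=
    intervalIntegrable_const.mono_fun'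
      (by have := hmeas t; unfold blaschke; fun_prop : Measurable _).aestronglyMeasurable
      (ae_of_all _ fun u => norm_mul_le_of_le (norm_blaschke_le hz (hh t u)) (hK u))
  have hF'int : IntervalIntegrable (fun u => blaschkeDeriv z (w u) * (I * w u * B u) * K u)
      volume 0 (2 * π) :=
    intervalIntegrable_const.mono_fun'
      (by unfold blaschkeDeriv; fun_prop : Measurable _).aestronglyMeasurable
      (ae_of_all _ fun u => norm_mul_le_of_le
        (norm_mul_le_of_le (norm_blaschkeDeriv_le hz (hw u)) (hv u)) (hK u))
  have hintegrand (t u : ℝ) : (h t u - z) / (1 - conj z * h t u) *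
      (exp (-(u : ℂ) * I) / (conj z - exp (-(u : ℂ) * I)) ^ 2) = blaschke z (h t u) * K u := by
    rw [neg_mul, Complex.exp_neg, inv_div_sub_inv_sq]; rfl
  have hderiv (u : ℝ) : ((1 - ‖z‖ ^ 2 : ℝ) : ℂ) * (I * exp (2 * (u : ℂ) * I) * (B u : ℝ) /
      (1 - conj z * exp (u * I)) ^ 4) = blaschkeDeriv z (w u) * (I * w u * B u) * K u := by
    rw [show 2 * (u : ℂ) * I = (2 : ℕ) * (u * I) by push_cast; ring, Complex.exp_nat_mul]
    simp only [K, w, blaschkeDeriv]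
    generalize 1 - conj z * exp (u * I) = q
    ring
  rw [mul_assoc, ← intervalIntegral.integral_const_mul]
  simp only [hintegrand, hderiv]
  exact (hF.hasDerivAt_intervalIntegral (.of_forall hFint) hF'int).const_mul _
end

section
/- Let λ be a finite positive measure on 𝔻 of the form λ = ℓ(w) dudv with ℓ ≥ 0 locally integrable, and define for α, β > 0 the function λ̃(z) = ∬_𝔻 (1 − |z|²)^α (1 − |w|²)^β / |1 − z̄w|^{α+β+2} · ℓ(w) dudv. If ℓ(w) dudv is a Carleson measure on 𝔻 with Carleson norm ‖λ‖_c, then λ̃(z) dxdy is a Carleson measure on 𝔻 and ‖λ̃‖_c ≤ C(α, β) ‖λ‖_c for a constant depending only on α and β. -/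
/-!
By Tonelli, the integral of `λ̃` over `𝔻 ∩ D(ζ, r)` equals `∫ J(w) ℓ(w) dudv` with
`J(w) = ∫_{𝔻 ∩ D(ζ, r)} K(z, w) dxdy`. Writing `M = |1 - z̄w|`, one has `1 - |z|² ≤ 2M`,
`1 - |w|² ≤ 2M` and `|z - w| ≤ M`, so `K(z, w) ≤ 2^α ((1 - |w|²)/M)^β / M²`.
Hence `J` is bounded on `𝔻` (for `β > 0` the kernel decays like `|z - w|^{-(β+2)}` away from
`D(w, 1 - |w|²)`), which handles `w ∈ D(ζ, 2r)`; for the other `w`, `J(w) ≲ (r / |w - ζ|)²`, and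
summing over the dyadic annuli around `ζ` with the Carleson condition gives `≲ C r`.
-/

open Complex MeasureTheory Metric Set Real ComplexConjugate
open scoped ENNReal

section Dyadic

variable {X : Type*} [PseudoMetricSpace X]

theorem compl_ball_subset_iUnion_ball_diff_ball (x : X) {R : ℝ} (hR : 0 < R) :
    (ball x R)ᶜ ⊆ ⋃ k : ℕ, ball x (2 ^ (k + 1) * R) \ ball x (2 ^ k * R) := by
  intro y hy
  rw [mem_compl_iff, mem_ball, not_lt] at hy
  obtain ⟨k, hk, hk'⟩ := exists_nat_pow_near ((one_le_div hR).2 hy) one_lt_two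
  exact mem_iUnion.2 ⟨k, mem_ball.2 ((div_lt_iff₀ hR).1 hk'),
    fun h => (mem_ball.1 h).not_ge ((le_div_iff₀ hR).1 hk)⟩

variable [MeasurableSpace X]

theorem measure_ball_le_of_forall_lt {ν : Measure X} {x : X} {R : ℝ} {m : ℝ≥0∞}
    (h : ∀ s < R, ν (ball x s) ≤ m) : ν (ball x R) ≤ m := by
  have hcover : ball x R ⊆ ⋃ n : ℕ, ball x (R - 1 / (n + 1)) := by
    intro y hy
    obtain ⟨n, hn⟩ := exists_nat_one_div_lt (sub_pos.2 (mem_ball.1 hy))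
    exact mem_iUnion.2 ⟨n, mem_ball.2 (by linarith)⟩
  have hmono : Monotone fun n : ℕ => ball x (R - 1 / (n + 1)) := fun m n hmn =>
    ball_subset_ball (by linarith [Nat.one_div_le_one_div (α := ℝ) hmn])
  calc ν (ball x R) ≤ ν (⋃ n : ℕ, ball x (R - 1 / (n + 1))) := measure_mono hcover
    _ = ⨆ n : ℕ, ν (ball x (R - 1 / (n + 1))) := hmono.measure_iUnion
    _ ≤ m := iSup_le fun n => h _ (by linarith [Nat.one_div_pos_of_nat (α := ℝ) (n := n)])

theorem lintegral_compl_ball_rpow_div_dist_le [OpensMeasurableSpace X] {ν : Measure X} {x : X}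
    {C R p q : ℝ} (hR : 0 < R) (hq : 0 ≤ q) (hqp : q < p)
    (hν : ∀ s, R ≤ s → ν (ball x s) ≤ ENNReal.ofReal (C * s ^ q)) :
    ∫⁻ y in (ball x R)ᶜ, ENNReal.ofReal ((R / dist y x) ^ p) ∂ν
      ≤ ENNReal.ofReal (2 ^ q * C * R ^ q / (1 - 2 ^ (q - p))) := by
  set ρ : ℝ := 2 ^ (q - p)
  have hρ0 : 0 < ρ := by positivity
  have hρ1 : ρ < 1 := rpow_lt_one_of_one_lt_of_neg one_lt_two (by linarith)
  have hannulus : ∀ k : ℕ,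
      ∫⁻ y in ball x (2 ^ (k + 1) * R) \ ball x (2 ^ k * R), ENNReal.ofReal ((R / dist y x) ^ p) ∂ν
        ≤ ENNReal.ofReal (2 ^ q * C * R ^ q) * ENNReal.ofReal ρ ^ k := by
    intro k
    have hk : (0 : ℝ) < 2 ^ k := by positivity
    calc _ ≤ ∫⁻ _ in ball x (2 ^ (k + 1) * R), ENNReal.ofReal (((2 : ℝ) ^ k)⁻¹ ^ p) ∂ν := by
          refine (setLIntegral_mono' (measurableSet_ball.diff measurableSet_ball)
            fun y hy => ?_).trans (lintegral_mono_set sdiff_subset)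
          have hy : 2 ^ k * R ≤ dist y x := not_lt.1 hy.2
          have hRy : R / dist y x ≤ (2 ^ k)⁻¹ := by
            rw [div_le_iff₀ ((mul_pos hk hR).trans_le hy)]
            calc R = (2 ^ k)⁻¹ * (2 ^ k * R) := by field_simp
              _ ≤ _ := by gcongr
          exact ENNReal.ofReal_le_ofReal (rpow_le_rpow (by positivity) hRy (by linarith))
      _ = ENNReal.ofReal (((2 : ℝ) ^ k)⁻¹ ^ p) * ν (ball x (2 ^ (k + 1) * R)) :=
          setLIntegral_const _ _
      _ ≤ ENNReal.ofReal (((2 : ℝ) ^ k)⁻¹ ^ p) * ENNReal.ofReal (C * (2 ^ (k + 1) * R) ^ q) := by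
          gcongr
          exact hν _ (le_mul_of_one_le_left hR.le (one_le_pow₀ one_le_two))
      _ = ENNReal.ofReal (2 ^ q * C * R ^ q) * ENNReal.ofReal ρ ^ k := by
          rw [← ENNReal.ofReal_mul (by positivity), ← ENNReal.ofReal_pow hρ0.le,
            ← ENNReal.ofReal_mul' (by positivity)]
          congr 1
          rw [pow_succ, mul_assoc, mul_rpow hk.le (by positivity), mul_rpow zero_le_two hR.le,
            inv_rpow hk.le, ← rpow_pow_comm zero_le_two, ← rpow_pow_comm zero_le_two,
            show ρ = 2 ^ q / 2 ^ p from rpow_sub zero_lt_two q p, div_pow]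
          field_simp
  calc ∫⁻ y in (ball x R)ᶜ, ENNReal.ofReal ((R / dist y x) ^ p) ∂ν
      ≤ ∫⁻ y in ⋃ k : ℕ, ball x (2 ^ (k + 1) * R) \ ball x (2 ^ k * R),
          ENNReal.ofReal ((R / dist y x) ^ p) ∂ν :=
        lintegral_mono_set (compl_ball_subset_iUnion_ball_diff_ball x hR)
    _ ≤ ∑' k : ℕ, ∫⁻ y in ball x (2 ^ (k + 1) * R) \ ball x (2 ^ k * R),
          ENNReal.ofReal ((R / dist y x) ^ p) ∂ν := lintegral_iUnion_le _ _
    _ ≤ ∑' k : ℕ, ENNReal.ofReal (2 ^ q * C * R ^ q) * ENNReal.ofReal ρ ^ k :=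
        ENNReal.tsum_le_tsum hannulus
    _ = ENNReal.ofReal (2 ^ q * C * R ^ q / (1 - ρ)) := by
        rw [ENNReal.tsum_mul_left, ENNReal.tsum_geometric, ← ENNReal.ofReal_one,
          ← ENNReal.ofReal_sub _ hρ0.le, ← ENNReal.ofReal_inv_of_pos (by linarith),
          ← ENNReal.ofReal_mul' (inv_pos.2 (by linarith)).le, div_eq_mul_inv]

end Dyadic

theorem ofReal_integral_le_lintegral_ofReal {α : Type*} [MeasurableSpace α] {μ : Measure α}
    {f : α → ℝ} (hf : 0 ≤ᵐ[μ] f) :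
    ENNReal.ofReal (∫ a, f a ∂μ) ≤ ∫⁻ a, ENNReal.ofReal (f a) ∂μ := by
  calc ENNReal.ofReal (∫ a, f a ∂μ) ≤ ‖∫ a, f a ∂μ‖ₑ := by
        rw [Real.enorm_eq_ofReal_abs]; exact ENNReal.ofReal_le_ofReal (le_abs_self _)
    _ ≤ ∫⁻ a, ‖f a‖ₑ ∂μ := enorm_integral_le_lintegral_enorm f
    _ = ∫⁻ a, ENNReal.ofReal (f a) ∂μ :=
        lintegral_congr_ae (hf.mono fun a ha => Real.enorm_of_nonneg ha)

noncomputable def diskKernel (α β : ℝ) (z w : ℂ) : ℝ :=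
  (1 - ‖z‖ ^ 2) ^ α * (1 - ‖w‖ ^ 2) ^ β / ‖1 - conj z * w‖ ^ (α + β + 2)

section DiskGeometry

variable (z w : ℂ)

theorem norm_one_sub_conj_mul_sq :
    ‖1 - conj z * w‖ ^ 2 = (1 - ‖z‖ ^ 2) * (1 - ‖w‖ ^ 2) + ‖z - w‖ ^ 2 := by
  simp only [Complex.sq_norm, normSq_apply, sub_re, sub_im, mul_re, mul_im, one_re, one_im, conj_re,
    conj_im]
  ring

theorem norm_one_sub_conj_mul_comm : ‖1 - conj z * w‖ = ‖1 - conj w * z‖ := by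
  rw [← norm_conj (1 - conj z * w)]
  simp [mul_comm]

variable {z w}

theorem norm_sub_le_norm_one_sub_conj_mul (hz : ‖z‖ ≤ 1) (hw : ‖w‖ ≤ 1) :
    ‖z - w‖ ≤ ‖1 - conj z * w‖ := by
  have hz' : 0 ≤ 1 - ‖z‖ ^ 2 := by nlinarith [norm_nonneg z]
  have hw' : 0 ≤ 1 - ‖w‖ ^ 2 := by nlinarith [norm_nonneg w]
  rw [← pow_le_pow_iff_left₀ (norm_nonneg _) (norm_nonneg _) two_ne_zero,
    norm_one_sub_conj_mul_sq]
  nlinarith [mul_nonneg hz' hw']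

theorem one_sub_norm_sq_le_two_mul_norm_one_sub_conj_mul (hw : ‖w‖ ≤ 1) :
    1 - ‖z‖ ^ 2 ≤ 2 * ‖1 - conj z * w‖ := by
  have htriangle : 1 - ‖z‖ * ‖w‖ ≤ ‖1 - conj z * w‖ := by
    simpa [norm_mul] using norm_sub_norm_le (1 : ℂ) (conj z * w)
  nlinarith [sq_nonneg (1 - ‖z‖), mul_le_mul_of_nonneg_left hw (norm_nonneg z)]

theorem one_sub_norm_sq_le_two_mul_norm_one_sub_conj_mul' (hz : ‖z‖ ≤ 1) :
    1 - ‖w‖ ^ 2 ≤ 2 * ‖1 - conj z * w‖ := by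
  rw [norm_one_sub_conj_mul_comm]
  exact one_sub_norm_sq_le_two_mul_norm_one_sub_conj_mul hz

end DiskGeometry

theorem volume_ball_eq_ofReal_pi_mul_sq (c : ℂ) {s : ℝ} (hs : 0 ≤ s) :
    volume (ball c s) = ENNReal.ofReal (π * s ^ 2) := by
  rw [Complex.volume_ball, ← ENNReal.ofReal_pow hs, mul_comm π, ENNReal.ofReal_mul (by positivity),
    ← NNReal.coe_real_pi, ENNReal.ofReal_coe_nnreal]

section Kernel

variable {α β : ℝ} {z w : ℂ}

theorem diskKernel_nonneg (hz : ‖z‖ ≤ 1) (hw : ‖w‖ ≤ 1) : 0 ≤ diskKernel α β z w := by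
  have hz' : 0 ≤ 1 - ‖z‖ ^ 2 := by nlinarith [norm_nonneg z]
  have hw' : 0 ≤ 1 - ‖w‖ ^ 2 := by nlinarith [norm_nonneg w]
  unfold diskKernel
  positivity

theorem measurable_diskKernel (α β : ℝ) : Measurable (Function.uncurry (diskKernel α β)) := by
  unfold diskKernel Function.uncurry
  fun_prop

theorem diskKernel_le (hα : 0 ≤ α) (hz : ‖z‖ ≤ 1) (hw : ‖w‖ < 1) :
    diskKernel α β z w
      ≤ 2 ^ α * ((1 - ‖w‖ ^ 2) / ‖1 - conj z * w‖) ^ β / ‖1 - conj z * w‖ ^ 2 := by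
  set M := ‖1 - conj z * w‖
  have hz' : 0 ≤ 1 - ‖z‖ ^ 2 := by nlinarith [norm_nonneg z]
  have hw' : 0 < 1 - ‖w‖ ^ 2 := by nlinarith [norm_nonneg w]
  have hzM := one_sub_norm_sq_le_two_mul_norm_one_sub_conj_mul (z := z) hw.le
  have hwM := one_sub_norm_sq_le_two_mul_norm_one_sub_conj_mul' (w := w) hz
  have hM : 0 < M := by linarith
  calc diskKernel α β z w = ((1 - ‖z‖ ^ 2) / M) ^ α * ((1 - ‖w‖ ^ 2) / M) ^ β / M ^ 2 := by
        rw [diskKernel, div_rpow hz' hM.le, div_rpow hw'.le hM.le, rpow_add hM, rpow_add hM,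
          rpow_two]
        field_simp
    _ ≤ 2 ^ α * ((1 - ‖w‖ ^ 2) / M) ^ β / M ^ 2 := by
        gcongr
        rw [div_le_iff₀ hM]; linarith

theorem diskKernel_le_div_sq (hα : 0 ≤ α) (hβ : 0 ≤ β) (hz : ‖z‖ ≤ 1) (hw : ‖w‖ < 1) :
    diskKernel α β z w ≤ 2 ^ (α + β + 2) / (1 - ‖w‖ ^ 2) ^ 2 := by
  set M := ‖1 - conj z * w‖
  have hw' : 0 < 1 - ‖w‖ ^ 2 := by nlinarith [norm_nonneg w]
  have hwM := one_sub_norm_sq_le_two_mul_norm_one_sub_conj_mul' (w := w) hz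
  have hM : 0 < M := by linarith
  calc diskKernel α β z w ≤ 2 ^ α * ((1 - ‖w‖ ^ 2) / M) ^ β / M ^ 2 := diskKernel_le hα hz hw
    _ ≤ 2 ^ α * 2 ^ β / ((1 - ‖w‖ ^ 2) / 2) ^ 2 := by
        gcongr
        · rw [div_le_iff₀ hM]; linarith
        · linarith
    _ = 2 ^ (α + β + 2) / (1 - ‖w‖ ^ 2) ^ 2 := by
        rw [rpow_add two_pos, rpow_add two_pos, rpow_two]
        field_simp

theorem diskKernel_le_div_sq_of_le_norm_sub (hα : 0 ≤ α) (hβ : 0 ≤ β) (hz : ‖z‖ ≤ 1)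
    (hw : ‖w‖ < 1) {t : ℝ} (ht : 0 < t) (htzw : t ≤ ‖z - w‖) :
    diskKernel α β z w ≤ 2 ^ (α + β) / t ^ 2 := by
  set M := ‖1 - conj z * w‖
  have hw' : 0 < 1 - ‖w‖ ^ 2 := by nlinarith [norm_nonneg w]
  have hwM := one_sub_norm_sq_le_two_mul_norm_one_sub_conj_mul' (w := w) hz
  have htM : t ≤ M := htzw.trans (norm_sub_le_norm_one_sub_conj_mul hz hw.le)
  have hM : 0 < M := ht.trans_le htM
  calc diskKernel α β z w ≤ 2 ^ α * ((1 - ‖w‖ ^ 2) / M) ^ β / M ^ 2 := diskKernel_le hα hz hw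
    _ ≤ 2 ^ α * 2 ^ β / t ^ 2 := by
        gcongr
        rw [div_le_iff₀ hM]; linarith
    _ = 2 ^ (α + β) / t ^ 2 := by rw [rpow_add two_pos]

theorem diskKernel_le_rpow_of_le_norm_sub (hα : 0 ≤ α) (hβ : 0 ≤ β) (hz : ‖z‖ ≤ 1)
    (hw : ‖w‖ < 1) (hzw : 1 - ‖w‖ ^ 2 ≤ ‖z - w‖) :
    diskKernel α β z w
      ≤ 2 ^ α / (1 - ‖w‖ ^ 2) ^ 2 * ((1 - ‖w‖ ^ 2) / ‖z - w‖) ^ (β + 2) := by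
  set M := ‖1 - conj z * w‖
  set δ := 1 - ‖w‖ ^ 2
  have hδ : 0 < δ := by nlinarith [norm_nonneg w]
  have hdM : ‖z - w‖ ≤ M := norm_sub_le_norm_one_sub_conj_mul hz hw.le
  have hd : 0 < ‖z - w‖ := hδ.trans_le hzw
  calc diskKernel α β z w ≤ 2 ^ α * (δ / M) ^ β / M ^ 2 := diskKernel_le hα hz hw
    _ ≤ 2 ^ α * (δ / ‖z - w‖) ^ β / ‖z - w‖ ^ 2 := by gcongr
    _ = 2 ^ α / δ ^ 2 * (δ / ‖z - w‖) ^ (β + 2) := by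
        rw [rpow_add (by positivity), rpow_two]
        field_simp

theorem setLIntegral_diff_ball_diskKernel_le (hα : 0 ≤ α) (hβ : 0 < β) (hw : ‖w‖ < 1) :
    ∫⁻ z in ball 0 1 \ ball w (1 - ‖w‖ ^ 2), ENNReal.ofReal (diskKernel α β z w)
      ≤ ENNReal.ofReal (2 ^ α * 4 * π / (1 - 2 ^ (-β))) := by
  set δ := 1 - ‖w‖ ^ 2
  have hδ : 0 < δ := by nlinarith [norm_nonneg w]
  calc _ ≤ ∫⁻ z in (ball w δ)ᶜ, ENNReal.ofReal (2 ^ α / δ ^ 2 * (δ / dist z w) ^ (β + 2)) := by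
        refine (setLIntegral_mono' (measurableSet_ball.diff measurableSet_ball)
          fun z hz => ?_).trans (lintegral_mono_set (sdiff_subset_compl _ _))
        have hzw : δ ≤ ‖z - w‖ := by simpa [Complex.dist_eq] using hz.2
        rw [Complex.dist_eq]
        exact ENNReal.ofReal_le_ofReal (diskKernel_le_rpow_of_le_norm_sub hα hβ.le
          (mem_ball_zero_iff.1 hz.1).le hw hzw)
    _ = ENNReal.ofReal (2 ^ α / δ ^ 2)
          * ∫⁻ z in (ball w δ)ᶜ, ENNReal.ofReal ((δ / dist z w) ^ (β + 2)) := by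
        simp_rw [ENNReal.ofReal_mul (by positivity : (0 : ℝ) ≤ 2 ^ α / δ ^ 2)]
        exact lintegral_const_mul' _ _ ENNReal.ofReal_ne_top
    _ ≤ ENNReal.ofReal (2 ^ α / δ ^ 2)
          * ENNReal.ofReal (2 ^ (2 : ℝ) * π * δ ^ (2 : ℝ) / (1 - 2 ^ ((2 : ℝ) - (β + 2)))) := by
        gcongr
        refine lintegral_compl_ball_rpow_div_dist_le hδ zero_le_two (by linarith) fun s hs => ?_
        rw [rpow_two, volume_ball_eq_ofReal_pi_mul_sq w (hδ.le.trans hs)]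
    _ = ENNReal.ofReal (2 ^ α * 4 * π / (1 - 2 ^ (-β))) := by
        rw [← ENNReal.ofReal_mul (by positivity), rpow_two, rpow_two,
          show (2 : ℝ) - (β + 2) = -β by ring]
        congr 1
        field_simp
        ring

theorem lintegral_diskKernel_le (hα : 0 ≤ α) (hβ : 0 < β) (hw : ‖w‖ < 1) :
    ∫⁻ z in ball (0 : ℂ) 1, ENNReal.ofReal (diskKernel α β z w)
      ≤ ENNReal.ofReal (2 ^ (α + β + 2) * π + 2 ^ α * 4 * π / (1 - 2 ^ (-β))) := by
  set δ := 1 - ‖w‖ ^ 2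
  have hδ : 0 < δ := by nlinarith [norm_nonneg w]
  have hβ1 : (2 : ℝ) ^ (-β) < 1 := rpow_lt_one_of_one_lt_of_neg one_lt_two (by linarith)
  have hnear : ∫⁻ z in ball 0 1 ∩ ball w δ, ENNReal.ofReal (diskKernel α β z w)
      ≤ ENNReal.ofReal (2 ^ (α + β + 2) * π) :=
    calc _ ≤ ∫⁻ _ in ball w δ, ENNReal.ofReal (2 ^ (α + β + 2) / δ ^ 2) := by
          refine (setLIntegral_mono' (measurableSet_ball.inter measurableSet_ball)
            fun z hz => ?_).trans (lintegral_mono_set inter_subset_right)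
          exact ENNReal.ofReal_le_ofReal
            (diskKernel_le_div_sq hα hβ.le (mem_ball_zero_iff.1 hz.1).le hw)
      _ = ENNReal.ofReal (2 ^ (α + β + 2) / δ ^ 2 * (π * δ ^ 2)) := by
          rw [setLIntegral_const, volume_ball_eq_ofReal_pi_mul_sq w hδ.le,
            ← ENNReal.ofReal_mul (by positivity)]
      _ = ENNReal.ofReal (2 ^ (α + β + 2) * π) := by congr 1; field_simp
  rw [← lintegral_inter_add_sdiff _ _ measurableSet_ball,
    ENNReal.ofReal_add (by positivity) (div_nonneg (by positivity) (by linarith))]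
  exact add_le_add hnear (setLIntegral_diff_ball_diskKernel_le hα hβ hw)

theorem lintegral_diskKernel_le_of_two_mul_le_dist (hα : 0 ≤ α) (hβ : 0 ≤ β) (hw : ‖w‖ < 1)
    {ζ : ℂ} {r : ℝ} (hr : 0 < r) (hwζ : 2 * r ≤ dist w ζ) :
    ∫⁻ z in ball 0 1 ∩ ball ζ r, ENNReal.ofReal (diskKernel α β z w)
      ≤ ENNReal.ofReal (2 ^ (α + β) * π * (2 * r / dist w ζ) ^ 2) := by
  have hd : 0 < dist w ζ := by linarith
  calc _ ≤ ∫⁻ _ in ball ζ r, ENNReal.ofReal (2 ^ (α + β) / (dist w ζ / 2) ^ 2) := by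
        refine (setLIntegral_mono' (measurableSet_ball.inter measurableSet_ball)
          fun z hz => ?_).trans (lintegral_mono_set inter_subset_right)
        have hzw : dist w ζ / 2 ≤ ‖z - w‖ := by
          have := dist_triangle w z ζ
          rw [dist_comm w z, Complex.dist_eq z w] at this
          linarith [mem_ball.1 hz.2]
        exact ENNReal.ofReal_le_ofReal (diskKernel_le_div_sq_of_le_norm_sub hα hβ
          (mem_ball_zero_iff.1 hz.1).le hw (by positivity) hzw)
    _ = ENNReal.ofReal (2 ^ (α + β) / (dist w ζ / 2) ^ 2 * (π * r ^ 2)) := by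
        rw [setLIntegral_const, volume_ball_eq_ofReal_pi_mul_sq ζ hr.le,
          ← ENNReal.ofReal_mul (by positivity)]
    _ = ENNReal.ofReal (2 ^ (α + β) * π * (2 * r / dist w ζ) ^ 2) := by
        congr 1
        field_simp

theorem setLIntegral_compl_ball_lintegral_diskKernel_le (hα : 0 ≤ α) (hβ : 0 ≤ β)
    {ν : Measure ℂ} {ζ : ℂ} {C r : ℝ} (hr : 0 < r) (hνD : ∀ᵐ w ∂ν, w ∈ ball (0 : ℂ) 1)
    (hν : ∀ s > 0, ν (ball ζ s) ≤ ENNReal.ofReal (C * s)) :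
    ∫⁻ w in (ball ζ (2 * r))ᶜ, (∫⁻ z in ball 0 1 ∩ ball ζ r, ENNReal.ofReal (diskKernel α β z w)) ∂ν
      ≤ ENNReal.ofReal (8 * π * 2 ^ (α + β) * C * r) :=
  calc _ ≤ ∫⁻ w in (ball ζ (2 * r))ᶜ,
        ENNReal.ofReal (2 ^ (α + β) * π) * ENNReal.ofReal ((2 * r / dist w ζ) ^ (2 : ℝ)) ∂ν := by
        refine setLIntegral_mono_ae' measurableSet_ball.compl (hνD.mono fun w hw hwζ => ?_)
        rw [← ENNReal.ofReal_mul (by positivity), rpow_two]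
        exact lintegral_diskKernel_le_of_two_mul_le_dist hα hβ (mem_ball_zero_iff.1 hw) hr
          (not_lt.1 hwζ)
    _ ≤ ENNReal.ofReal (2 ^ (α + β) * π)
          * ENNReal.ofReal (2 ^ (1 : ℝ) * C * (2 * r) ^ (1 : ℝ) / (1 - 2 ^ ((1 : ℝ) - 2))) := by
        rw [lintegral_const_mul' _ _ ENNReal.ofReal_ne_top]
        gcongr
        refine lintegral_compl_ball_rpow_div_dist_le (by positivity) zero_le_one one_lt_two
          fun s hs => ?_
        rw [rpow_one]
        exact hν s (by linarith)
    _ = ENNReal.ofReal (8 * π * 2 ^ (α + β) * C * r) := by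
        rw [← ENNReal.ofReal_mul (by positivity), rpow_one, rpow_one,
          show (1 : ℝ) - 2 = -1 by norm_num, rpow_neg_one]
        congr 1
        ring

theorem exists_lintegral_diskKernel_le_of_measure_ball_le (hα : 0 ≤ α) (hβ : 0 < β) :
    ∃ K > 0, ∀ (ν : Measure ℂ) (ζ : ℂ) {C r : ℝ}, 0 ≤ C → 0 < r →
      (∀ᵐ w ∂ν, w ∈ ball (0 : ℂ) 1) → (∀ s > 0, ν (ball ζ s) ≤ ENNReal.ofReal (C * s)) →
      ∫⁻ w, (∫⁻ z in ball 0 1 ∩ ball ζ r, ENNReal.ofReal (diskKernel α β z w)) ∂ν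
        ≤ ENNReal.ofReal (K * C * r) := by
  set c := 2 ^ (α + β + 2) * π + 2 ^ α * 4 * π / (1 - 2 ^ (-β))
  have hc : 0 < c := by
    have : (2 : ℝ) ^ (-β) < 1 := rpow_lt_one_of_one_lt_of_neg one_lt_two (by linarith)
    have : 0 < 1 - (2 : ℝ) ^ (-β) := by linarith
    positivity
  refine ⟨2 * c + 8 * π * 2 ^ (α + β), by positivity, fun ν ζ C r hC hr hνD hν => ?_⟩
  set J : ℂ → ℝ≥0∞ := fun w =>
    ∫⁻ z in ball (0 : ℂ) 1 ∩ ball ζ r, ENNReal.ofReal (diskKernel α β z w)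
  have hnear : ∫⁻ w in ball ζ (2 * r), J w ∂ν ≤ ENNReal.ofReal (2 * c * C * r) :=
    calc _ ≤ ∫⁻ _ in ball ζ (2 * r), ENNReal.ofReal c ∂ν := by
          refine setLIntegral_mono_ae' measurableSet_ball (hνD.mono fun w hw _ => ?_)
          exact (lintegral_mono_set inter_subset_left).trans
            (lintegral_diskKernel_le hα hβ (mem_ball_zero_iff.1 hw))
      _ ≤ ENNReal.ofReal c * ENNReal.ofReal (C * (2 * r)) := by
          rw [setLIntegral_const]
          gcongr
          exact hν _ (by positivity)
      _ = ENNReal.ofReal (2 * c * C * r) := by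
          rw [← ENNReal.ofReal_mul hc.le]
          congr 1
          ring
  calc ∫⁻ w, J w ∂ν = ∫⁻ w in ball ζ (2 * r), J w ∂ν + ∫⁻ w in (ball ζ (2 * r))ᶜ, J w ∂ν :=
        (lintegral_add_compl J measurableSet_ball).symm
    _ ≤ ENNReal.ofReal (2 * c * C * r) + ENNReal.ofReal (8 * π * 2 ^ (α + β) * C * r) :=
        add_le_add hnear (setLIntegral_compl_ball_lintegral_diskKernel_le hα hβ.le hr hνD hν)
    _ = ENNReal.ofReal ((2 * c + 8 * π * 2 ^ (α + β)) * C * r) := by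
        rw [← ENNReal.ofReal_add (by positivity) (by positivity)]
        congr 1
        ring

end Kernel

noncomputable def diskMeasure (ℓ : ℂ → ℝ) : Measure ℂ :=
  (volume.restrict (ball 0 1)).withDensity fun w => ENNReal.ofReal (ℓ w)

theorem diskMeasure_apply (ℓ : ℂ → ℝ) {s : Set ℂ} (hs : MeasurableSet s) :
    diskMeasure ℓ s = ∫⁻ w in ball 0 1 ∩ s, ENNReal.ofReal (ℓ w) := by
  rw [diskMeasure, withDensity_apply _ hs, Measure.restrict_restrict hs, inter_comm]

theorem ae_diskMeasure_mem_ball (ℓ : ℂ → ℝ) : ∀ᵐ w ∂diskMeasure ℓ, w ∈ ball (0 : ℂ) 1 :=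
  (withDensity_absolutelyContinuous _ _).ae_le (ae_restrict_mem measurableSet_ball)

theorem diskMeasure_ball_le {ℓ : ℂ → ℝ} (hℓ0 : ∀ w, 0 ≤ ℓ w) (hℓi : IntegrableOn ℓ (ball 0 1))
    {C : ℝ} (hC : 0 ≤ C) {ζ : ℂ} (hζ : ζ ∈ sphere (0 : ℂ) 1)
    (hcar : ∀ r ∈ Ioo (0 : ℝ) 2, ∫ w in ball 0 1 ∩ ball ζ r, ℓ w ≤ C * r) (s : ℝ) :
    diskMeasure ℓ (ball ζ s) ≤ ENNReal.ofReal (C * s) := by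
  have hlt : ∀ s < 2, diskMeasure ℓ (ball ζ s) ≤ ENNReal.ofReal (C * s) := by
    intro s hs2
    rcases le_or_gt s 0 with hs0 | hs0
    · simp [ball_eq_empty.2 hs0]
    rw [diskMeasure_apply ℓ measurableSet_ball, ← ofReal_integral_eq_lintegral_ofReal
      (hℓi.mono_set inter_subset_left) (ae_of_all _ hℓ0)]
    exact ENNReal.ofReal_le_ofReal (hcar s ⟨hs0, hs2⟩)
  rcases lt_or_ge s 2 with hs2 | hs2
  · exact hlt s hs2
  have hD : ball (0 : ℂ) 1 ⊆ ball ζ 2 :=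
    ball_subset_ball' (by rw [dist_comm, mem_sphere.1 hζ]; norm_num)
  calc diskMeasure ℓ (ball ζ s) = diskMeasure ℓ (ball ζ 2) := by
        rw [diskMeasure_apply _ measurableSet_ball, diskMeasure_apply _ measurableSet_ball,
          inter_eq_left.2 hD, inter_eq_left.2 (hD.trans (ball_subset_ball hs2))]
    _ ≤ ENNReal.ofReal (C * 2) := measure_ball_le_of_forall_lt fun s' hs' =>
        (hlt s' hs').trans (ENNReal.ofReal_le_ofReal (mul_le_mul_of_nonneg_left hs'.le hC))
    _ ≤ ENNReal.ofReal (C * s) := ENNReal.ofReal_le_ofReal (mul_le_mul_of_nonneg_left hs2 hC)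

theorem ofReal_setIntegral_integral_diskKernel_mul_le {α β : ℝ} {ℓ : ℂ → ℝ} (hℓ : Measurable ℓ)
    (hℓ0 : ∀ w, 0 ≤ ℓ w) {E : Set ℂ} (hE : MeasurableSet E) (hED : E ⊆ ball 0 1) :
    ENNReal.ofReal (∫ z in E, ∫ w in ball (0 : ℂ) 1, diskKernel α β z w * ℓ w)
      ≤ ∫⁻ w, (∫⁻ z in E, ENNReal.ofReal (diskKernel α β z w)) ∂diskMeasure ℓ := by
  have hnonneg : ∀ z ∈ E, ∀ w ∈ ball (0 : ℂ) 1, 0 ≤ diskKernel α β z w * ℓ w :=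
    fun z hz w hw => mul_nonneg (diskKernel_nonneg (mem_ball_zero_iff.1 (hED hz)).le
      (mem_ball_zero_iff.1 hw).le) (hℓ0 w)
  calc ENNReal.ofReal (∫ z in E, ∫ w in ball (0 : ℂ) 1, diskKernel α β z w * ℓ w)
      ≤ ∫⁻ z in E, ENNReal.ofReal (∫ w in ball (0 : ℂ) 1, diskKernel α β z w * ℓ w) :=
        ofReal_integral_le_lintegral_ofReal ((ae_restrict_iff' hE).2 (ae_of_all _ fun z hz =>
          setIntegral_nonneg measurableSet_ball (hnonneg z hz)))
    _ ≤ ∫⁻ z in E, ∫⁻ w in ball (0 : ℂ) 1,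
          ENNReal.ofReal (diskKernel α β z w) * ENNReal.ofReal (ℓ w) :=
        setLIntegral_mono' hE fun z hz => (ofReal_integral_le_lintegral_ofReal
          ((ae_restrict_iff' measurableSet_ball).2 (ae_of_all _ (hnonneg z hz)))).trans_eq
          (lintegral_congr fun w => ENNReal.ofReal_mul' (hℓ0 w))
    _ = ∫⁻ w in ball (0 : ℂ) 1, ∫⁻ z in E,
          ENNReal.ofReal (diskKernel α β z w) * ENNReal.ofReal (ℓ w) :=
        lintegral_lintegral_swap ((measurable_diskKernel α β).ennreal_ofReal.mul
          (hℓ.comp measurable_snd).ennreal_ofReal).aemeasurable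
    _ = ∫⁻ w, (∫⁻ z in E, ENNReal.ofReal (diskKernel α β z w)) ∂diskMeasure ℓ := by
        rw [diskMeasure, lintegral_withDensity_eq_lintegral_mul_non_measurable _
          hℓ.ennreal_ofReal (ae_of_all _ fun _ => ENNReal.ofReal_lt_top)]
        refine lintegral_congr fun w => ?_
        rw [lintegral_mul_const' _ _ ENNReal.ofReal_ne_top, Pi.mul_apply, mul_comm]

/-- Carleson-measure boundedness of the kernel operator: for `α, β > 0` there is a
constant `K = C(α,β)` such that whenever `ℓ ≥ 0` defines a Carleson measure
`ℓ(w) dudv` on `𝔻` with Carleson norm at most `C`, the function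
`λ̃(z) = ∬_𝔻 (1−|z|²)^α (1−|w|²)^β / |1−z̄w|^{α+β+2} ℓ(w) dudv` defines a Carleson
measure `λ̃(z) dxdy` with norm at most `K·C`. -/
theorem stmt19 (α β : ℝ) (hα : 0 < α) (hβ : 0 < β) :
    ∃ K : ℝ, 0 < K ∧
      ∀ (ℓ : ℂ → ℝ), Measurable ℓ → (∀ w, 0 ≤ ℓ w) →
        IntegrableOn ℓ (ball (0:ℂ) 1) →
        ∀ C : ℝ, 0 ≤ C →
          (∀ ζ ∈ sphere (0:ℂ) 1, ∀ r ∈ Ioo (0:ℝ) 2,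
            (∫ w in ball (0:ℂ) 1 ∩ ball ζ r, ℓ w) ≤ C * r) →
          ∀ ζ ∈ sphere (0:ℂ) 1, ∀ r ∈ Ioo (0:ℝ) 2,
            (∫ z in ball (0:ℂ) 1 ∩ ball ζ r,
                ∫ w in ball (0:ℂ) 1,
                  ((1 - ‖z‖ ^ 2) ^ α * (1 - ‖w‖ ^ 2) ^ β /
                      ‖1 - (starRingEnd ℂ) z * w‖ ^ (α + β + 2)) * ℓ w)
              ≤ K * C * r := by
  obtain ⟨K, hK, hbound⟩ := exists_lintegral_diskKernel_le_of_measure_ball_le hα.le hβ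
  refine ⟨K, hK, fun ℓ hℓ hℓ0 hℓi C hC hcar ζ hζ r hr => ?_⟩
  rw [← ENNReal.ofReal_le_ofReal_iff (by have := hr.1; positivity)]
  calc _ ≤ ∫⁻ w, (∫⁻ z in ball 0 1 ∩ ball ζ r, ENNReal.ofReal (diskKernel α β z w))
          ∂diskMeasure ℓ :=
        ofReal_setIntegral_integral_diskKernel_mul_le hℓ hℓ0
          (measurableSet_ball.inter measurableSet_ball) inter_subset_left
    _ ≤ ENNReal.ofReal (K * C * r) := hbound _ ζ hC hr.1 (ae_diskMeasure_mem_ball ℓ)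
        fun s _ => diskMeasure_ball_le hℓ0 hℓi hC hζ (hcar ζ hζ) s
end
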